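/- Any online algorithm that assigns each item deterministically at the class level (possibly randomizing within classes) is at best (1/2)-CPROP: there is an adversarial instance with two classes of three agents each and at most four items on which such an algorithm attains expected class value at most half the proportional share of some class. -/
import Mathlib


open Finset

variable {A : Type*} [Fintype A] [DecidableEq A] {k : ℕ}

/-- The set of agents that like the item arriving at step `t`. -/
def likersAt (L : List (Finset A)) (t : ℕ) : Finset A := L.getD t ∅

/-- A finset of (item index, agent) pairs is a partial matching. -/
def IsPartialMatching (P : Finset (ℕ × A)) : Prop :=
  ∀ p ∈ P, ∀ q ∈ P, (p.1 = q.1 ∨ p.2 = q.2) → p = q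

instance (P : Finset (ℕ × A)) : Decidable (IsPartialMatching P) := by
  unfold IsPartialMatching; infer_instance

/-- Optimistic valuation `V*` of the class with agents `C` for the set `S` of item
indices: the maximum size of a matching between `S` and `C` along the likes in `L`. -/
def Vstar (L : List (Finset A)) (C : Finset A) (S : Finset ℕ) : ℕ :=
  ((S ×ˢ C).powerset.filter
    (fun P => (∀ p ∈ P, p.2 ∈ likersAt L p.1) ∧ IsPartialMatching P)).sup Finset.card

/-- The agents of class `i`. -/
def classAgents (classOf : A → Fin k) (i : Fin k) : Finset A :=
  Finset.univ.filter fun a => classOf a = i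

/-- A deterministic online algorithm: given the liker sets of previously arrived items
and the liker set of the current item, it proposes an agent (or discards the item). -/
abbrev OnlineAlg (A : Type*) := List (Finset A) → Finset A → Option A

/-- The set of agents matched before step `t` when `Alg` runs on instance `L`. -/
def matchedUpTo (Alg : OnlineAlg A) (L : List (Finset A)) : ℕ → Finset A
  | 0 => ∅
  | t + 1 =>
    let prev := matchedUpTo Alg L t
    match Alg (L.take t) (likersAt L t) with
    | some a => if a ∈ likersAt L t ∧ a ∉ prev then insert a prev else prev
    | none => prev

/-- The agent to whom item `t` is (irrevocably) matched by `Alg` on instance `L`;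
a proposal is effective only if the proposed agent likes the item and is unmatched. -/
def assignAt (Alg : OnlineAlg A) (L : List (Finset A)) (t : ℕ) : Option A :=
  match Alg (L.take t) (likersAt L t) with
  | some a => if a ∈ likersAt L t ∧ a ∉ matchedUpTo Alg L t then some a else none
  | none => none

/-- The set of items matched to agents of class `j`. -/
def classItems (classOf : A → Fin k) (Alg : OnlineAlg A) (L : List (Finset A))
    (j : Fin k) : Finset ℕ :=
  (Finset.range L.length).filter fun t =>
    ∃ a ∈ (Finset.univ : Finset A), assignAt Alg L t = some a ∧ classOf a = j

/-- Non-wastefulness of an online algorithm: whenever an arriving item is liked by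
some currently unmatched agent, the item is matched. -/
def NonWasteful (Alg : OnlineAlg A) : Prop :=
  ∀ (L : List (Finset A)) (t : ℕ), t < L.length →
    (∃ a ∈ likersAt L t, a ∉ matchedUpTo Alg L t) → (assignAt Alg L t).isSome

/-- `Alg` is `α`-CEF1: on every instance, for every pair of classes `i, j`, either
class `j` receives no item or the envy of `i` towards `j` is bounded after removing
one item from `j`'s bundle. -/
def IsCEF1 (classOf : A → Fin k) (α : ℝ) (Alg : OnlineAlg A) : Prop :=
  ∀ (L : List (Finset A)) (i j : Fin k),
    classItems classOf Alg L j = ∅ ∨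
    ∃ t ∈ classItems classOf Alg L j,
      ((classItems classOf Alg L i).card : ℝ) ≥
        α * (Vstar L (classAgents classOf i) (classItems classOf Alg L j \ {t}) : ℝ)

/-- The maximin share of class `i`: the best over indivisible matchings `X` of all
items to all agents of the worst bundle value `V*ᵢ(Yⱼ(X))` over classes `j`. -/
noncomputable def mmsShare (classOf : A → Fin k) (L : List (Finset A)) (i : Fin k) : ℕ :=
  sSup {v : ℕ | ∃ X ∈ ((Finset.range L.length) ×ˢ (Finset.univ : Finset A)).powerset,
    (∀ p ∈ X, p.2 ∈ likersAt L p.1) ∧ IsPartialMatching X ∧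
    ∀ j : Fin k, v ≤ Vstar L (classAgents classOf i)
      ((X.filter fun p => classOf p.2 = j).image Prod.fst)}

/-- `Alg` is `α`-CMMS on every instance. -/
def IsCMMS (classOf : A → Fin k) (α : ℝ) (Alg : OnlineAlg A) : Prop :=
  ∀ (L : List (Finset A)) (i : Fin k),
    ((classItems classOf Alg L i).card : ℝ) ≥ α * (mmsShare classOf L i : ℝ)

noncomputable section

/-- Optimistic fractional valuation `V*` of the class with agents `C` for an item
bundle `y`. -/
def VstarFrac (L : List (Finset A)) (C : Finset A) (y : ℕ → ℝ) : ℝ :=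
  sSup {v : ℝ | ∃ x : ℕ → A → ℝ,
    (∀ t a, 0 ≤ x t a) ∧
    (∀ t a, x t a ≠ 0 → a ∈ C ∧ a ∈ likersAt L t ∧ t < L.length) ∧
    (∀ t, ∑ a ∈ C, x t a ≤ y t) ∧
    (∀ a, ∑ t ∈ Finset.range L.length, x t a ≤ 1) ∧
    v = ∑ t ∈ Finset.range L.length, ∑ a ∈ C, x t a}

/-- The proportional share of class `i`. -/
def propShare (classOf : A → Fin k) (L : List (Finset A)) (i : Fin k) : ℝ :=
  sSup {v : ℝ | ∃ x : ℕ → A → ℝ,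
    (∀ t a, 0 ≤ x t a) ∧
    (∀ t a, x t a ≠ 0 → a ∈ likersAt L t ∧ t < L.length) ∧
    (∀ t, ∑ a, x t a ≤ 1) ∧
    (∀ a, ∑ t ∈ Finset.range L.length, x t a ≤ 1) ∧
    ∀ j : Fin k, v ≤ VstarFrac L (classAgents classOf i)
      (fun t => ∑ a ∈ classAgents classOf j, x t a)}

/-- An agent-level online algorithm is consistent with a deterministic class-level
assignment rule `classAlg` if every item it matches goes to an agent of the class
chosen by `classAlg`. -/
def ConsistentWithClasses (classOf : A → Fin k)
    (classAlg : List (Finset A) → Finset A → Option (Fin k))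
    (Alg : OnlineAlg A) : Prop :=
  ∀ (L : List (Finset A)) (t : ℕ) (a : A),
    assignAt Alg L t = some a → classAlg (L.take t) (likersAt L t) = some (classOf a)

section AuxBasic
set_option linter.unusedSectionVars false
variable {A : Type*} [Fintype A] [DecidableEq A]

lemma assignAt_spec {Alg : OnlineAlg A} {L : List (Finset A)} {t : ℕ} {a : A}
    (h : assignAt Alg L t = some a) :
    a ∈ likersAt L t ∧ a ∉ matchedUpTo Alg L t ∧ a ∈ matchedUpTo Alg L (t + 1) := by
  unfold assignAt at h
  cases hA : Alg (L.take t) (likersAt L t) with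
  | none => rw [hA] at h; simp at h
  | some b =>
    rw [hA] at h
    change (if b ∈ likersAt L t ∧ b ∉ matchedUpTo Alg L t then some b else none) = some a at h
    by_cases hc : b ∈ likersAt L t ∧ b ∉ matchedUpTo Alg L t
    · rw [if_pos hc] at h
      injection h with h
      subst h
      refine ⟨hc.1, hc.2, ?_⟩
      unfold matchedUpTo
      rw [hA]
      simp [hc]
    · simp [hc] at h

lemma matchedUpTo_subset_succ (Alg : OnlineAlg A) (L : List (Finset A)) (t : ℕ) :
    matchedUpTo Alg L t ⊆ matchedUpTo Alg L (t + 1) := by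
  conv_rhs => unfold matchedUpTo
  cases hA : Alg (L.take t) (likersAt L t) with
  | none => simp
  | some b =>
    by_cases hc : b ∈ likersAt L t ∧ b ∉ matchedUpTo Alg L t
    · simp only [hc, if_pos]
      exact Finset.subset_insert _ _
    · simp [hc]

lemma matchedUpTo_mono (Alg : OnlineAlg A) (L : List (Finset A)) {t t' : ℕ} (h : t ≤ t') :
    matchedUpTo Alg L t ⊆ matchedUpTo Alg L t' := by
  induction t' with
  | zero => simp_all
  | succ n ih =>
    rcases Nat.lt_or_ge t (n+1) with h' | h'
    · exact (ih (Nat.lt_succ_iff.mp h')).trans (matchedUpTo_subset_succ Alg L n)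
    · have : t = n + 1 := le_antisymm h h'
      subst this; rfl

lemma sum_ite_and {β : Type*} [DecidableEq β] (s : Finset β) (b0 : β) (P : Prop) [Decidable P] :
    (∑ b ∈ s, if P ∧ b = b0 then (1:ℝ) else 0) = if P ∧ b0 ∈ s then 1 else 0 := by
  by_cases hP : P <;> simp [hP]

lemma sum_ite_and' {β : Type*} [DecidableEq β] (s : Finset β) (b0 : β) (P : Prop) [Decidable P] :
    (∑ b ∈ s, if b = b0 ∧ P then (1:ℝ) else 0) = if b0 ∈ s ∧ P then 1 else 0 := by
  by_cases hP : P <;> simp [hP]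

end AuxBasic

section AuxFrac
set_option linter.unusedSectionVars false
variable {A : Type*} [Fintype A] [DecidableEq A]

lemma le_vstarFrac (L : List (Finset A)) (C : Finset A) (y : ℕ → ℝ) (v : ℝ)
    (hx : ∃ x : ℕ → A → ℝ,
      (∀ t a, 0 ≤ x t a) ∧
      (∀ t a, x t a ≠ 0 → a ∈ C ∧ a ∈ likersAt L t ∧ t < L.length) ∧
      (∀ t, ∑ a ∈ C, x t a ≤ y t) ∧
      (∀ a, ∑ t ∈ Finset.range L.length, x t a ≤ 1) ∧
      v = ∑ t ∈ Finset.range L.length, ∑ a ∈ C, x t a) :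
    v ≤ VstarFrac L C y := by
  apply le_csSup
  · refine ⟨(C.card : ℝ), ?_⟩
    rintro w ⟨x, h0, h1, h2, h3, rfl⟩
    calc ∑ t ∈ Finset.range L.length, ∑ a ∈ C, x t a
        = ∑ a ∈ C, ∑ t ∈ Finset.range L.length, x t a := Finset.sum_comm
      _ ≤ ∑ _a ∈ C, 1 := Finset.sum_le_sum (fun a _ => h3 a)
      _ = (C.card : ℝ) := by simp
  · exact hx

lemma vstarFrac_le_card (L : List (Finset A)) (C : Finset A) (y : ℕ → ℝ) :
    VstarFrac L C y ≤ (C.card : ℝ) := by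
  apply Real.sSup_le
  · rintro w ⟨x, h0, h1, h2, h3, rfl⟩
    calc ∑ t ∈ Finset.range L.length, ∑ a ∈ C, x t a
        = ∑ a ∈ C, ∑ t ∈ Finset.range L.length, x t a := Finset.sum_comm
      _ ≤ ∑ _a ∈ C, 1 := Finset.sum_le_sum (fun a _ => h3 a)
      _ = (C.card : ℝ) := by simp
  · positivity

lemma vstarFrac_ge_one (L : List (Finset A)) (C : Finset A) (y : ℕ → ℝ)
    (hy : ∀ t, 0 ≤ y t) (t1 : ℕ) (u1 : A)
    (h1C : u1 ∈ C) (h1l : u1 ∈ likersAt L t1) (h1n : t1 < L.length) (hy1 : 1 ≤ y t1) :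
    (1:ℝ) ≤ VstarFrac L C y := by
  apply le_vstarFrac L C y 1
  refine ⟨fun t a => if t = t1 ∧ a = u1 then 1 else 0, ?_, ?_, ?_, ?_, ?_⟩
  · intro t a; dsimp only; split_ifs <;> norm_num
  · intro t a h
    by_cases c1 : t = t1 ∧ a = u1
    · obtain ⟨rfl, rfl⟩ := c1; exact ⟨h1C, h1l, h1n⟩
    · simp [c1] at h
  · intro t
    rw [sum_ite_and C u1 (t = t1)]
    by_cases c1 : t = t1
    · subst c1; simp [h1C, hy1]
    · simp [c1, hy t]
  · intro a
    rw [sum_ite_and' (Finset.range L.length) t1 (a = u1)]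
    split_ifs <;> norm_num
  · rw [Finset.sum_congr rfl (fun t _ => sum_ite_and C u1 (t = t1)),
      sum_ite_and' (Finset.range L.length) t1 (u1 ∈ C)]
    simp [h1C, Finset.mem_range, h1n]

lemma vstarFrac_ge_two (L : List (Finset A)) (C : Finset A) (y : ℕ → ℝ)
    (hy : ∀ t, 0 ≤ y t) (t1 t2 : ℕ) (u1 u2 : A)
    (ht : t1 ≠ t2) (hu : u1 ≠ u2)
    (h1C : u1 ∈ C) (h2C : u2 ∈ C)
    (h1l : u1 ∈ likersAt L t1) (h2l : u2 ∈ likersAt L t2)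
    (h1n : t1 < L.length) (h2n : t2 < L.length)
    (hy1 : 1 ≤ y t1) (hy2 : 1 ≤ y t2) :
    (2:ℝ) ≤ VstarFrac L C y := by
  apply le_vstarFrac L C y 2
  refine ⟨fun t a => (if t = t1 ∧ a = u1 then 1 else 0) + (if t = t2 ∧ a = u2 then 1 else 0),
    ?_, ?_, ?_, ?_, ?_⟩
  · intro t a; dsimp only; split_ifs <;> norm_num
  · intro t a h
    by_cases c1 : t = t1 ∧ a = u1
    · obtain ⟨rfl, rfl⟩ := c1; exact ⟨h1C, h1l, h1n⟩
    · by_cases c2 : t = t2 ∧ a = u2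
      · obtain ⟨rfl, rfl⟩ := c2; exact ⟨h2C, h2l, h2n⟩
      · simp [c1, c2] at h
  · intro t
    rw [Finset.sum_add_distrib, sum_ite_and C u1 (t = t1), sum_ite_and C u2 (t = t2)]
    by_cases c1 : t = t1
    · subst c1; simp [h1C, ht, hy1]
    · by_cases c2 : t = t2
      · subst c2; simp [h2C, c1, hy2]
      · simp [c1, c2, hy t]
  · intro a
    rw [Finset.sum_add_distrib, sum_ite_and' (Finset.range L.length) t1 (a = u1),
      sum_ite_and' (Finset.range L.length) t2 (a = u2)]
    by_cases c1 : a = u1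
    · subst c1; simp [hu, Finset.mem_range]
      split_ifs <;> norm_num
    · by_cases c2 : a = u2
      · subst c2; simp [c1]
        split_ifs <;> norm_num
      · simp [c1, c2]
  · rw [Finset.sum_congr rfl (fun t _ => by
        rw [Finset.sum_add_distrib, sum_ite_and C u1 (t = t1), sum_ite_and C u2 (t = t2)]),
      Finset.sum_add_distrib,
      sum_ite_and' (Finset.range L.length) t1 (u1 ∈ C),
      sum_ite_and' (Finset.range L.length) t2 (u2 ∈ C)]
    simp [h1C, h2C, Finset.mem_range, h1n, h2n]
    norm_num

lemma le_propShare {k : ℕ} (classOf : A → Fin k) (L : List (Finset A)) (i j0 : Fin k) (v : ℝ)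
    (hx : ∃ x : ℕ → A → ℝ,
      (∀ t a, 0 ≤ x t a) ∧
      (∀ t a, x t a ≠ 0 → a ∈ likersAt L t ∧ t < L.length) ∧
      (∀ t, ∑ a, x t a ≤ 1) ∧
      (∀ a, ∑ t ∈ Finset.range L.length, x t a ≤ 1) ∧
      ∀ j : Fin k, v ≤ VstarFrac L (classAgents classOf i)
        (fun t => ∑ a ∈ classAgents classOf j, x t a)) :
    v ≤ propShare classOf L i := by
  apply le_csSup
  · refine ⟨((classAgents classOf i).card : ℝ), ?_⟩
    rintro w ⟨x, h0, h1, h2, h3, h4⟩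
    exact (h4 j0).trans (vstarFrac_le_card _ _ _)
  · exact hx

end AuxFrac

section AuxProp
set_option linter.unusedSectionVars false
set_option maxHeartbeats 1000000
variable {A : Type*} [Fintype A] [DecidableEq A]

lemma mem_classAgents {k : ℕ} {classOf : A → Fin k} {j : Fin k} {a : A} :
    a ∈ classAgents classOf j ↔ classOf a = j := by simp [classAgents]

lemma fin2_resolve : ∀ (a b c : Fin 2), b ≠ a → c ≠ a → c = b := by decide

lemma propShare_ge_one (classOf : A → Fin 2) (L : List (Finset A)) (i : Fin 2)
    (s0 s1 : ℕ) (g0 g1 w : A)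
    (hs : s0 ≠ s1) (hs0 : s0 < L.length) (hs1 : s1 < L.length)
    (hg : g0 ≠ g1)
    (hg0l : g0 ∈ likersAt L s0) (hg1l : g1 ∈ likersAt L s1) (hwl : w ∈ likersAt L s1)
    (hg0c : classOf g0 = i) (hg1c : classOf g1 ≠ i) (hwc : classOf w = i) :
    (1:ℝ) ≤ propShare classOf L i := by
  apply le_propShare classOf L i i
  refine ⟨fun t a => (if t = s0 ∧ a = g0 then 1 else 0) + (if t = s1 ∧ a = g1 then 1 else 0),
    ?_, ?_, ?_, ?_, ?_⟩
  · intro t a; dsimp only; split_ifs <;> norm_num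
  · intro t a h
    by_cases c1 : t = s0 ∧ a = g0
    · obtain ⟨rfl, rfl⟩ := c1; exact ⟨hg0l, hs0⟩
    · by_cases c2 : t = s1 ∧ a = g1
      · obtain ⟨rfl, rfl⟩ := c2; exact ⟨hg1l, hs1⟩
      · simp [c1, c2] at h
  · intro t
    rw [Finset.sum_add_distrib, sum_ite_and Finset.univ g0 (t = s0),
      sum_ite_and Finset.univ g1 (t = s1)]
    simp only [Finset.mem_univ, and_true]
    split_ifs <;> norm_num <;> omega
  · intro a
    rw [Finset.sum_add_distrib, sum_ite_and' (Finset.range L.length) s0 (a = g0),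
      sum_ite_and' (Finset.range L.length) s1 (a = g1)]
    simp only [Finset.mem_range, hs0, hs1, true_and]
    split_ifs <;> norm_num <;> simp_all
  · intro j
    by_cases hj : j = i
    · subst hj
      apply vstarFrac_ge_one L _ _ ?_ s0 g0 (mem_classAgents.mpr hg0c) hg0l hs0
      · have : ∑ a ∈ classAgents classOf j, ((if s0 = s0 ∧ a = g0 then (1:ℝ) else 0) +
            (if s0 = s1 ∧ a = g1 then 1 else 0)) = 1 := by
          rw [Finset.sum_add_distrib, sum_ite_and _ g0 (s0 = s0), sum_ite_and _ g1 (s0 = s1)]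
          simp [mem_classAgents, hg0c, hs]
        exact this.symm.le
      · intro t
        apply Finset.sum_nonneg
        intro a _; dsimp only; split_ifs <;> norm_num
    · have hc1 : classOf g1 = j := fin2_resolve i j (classOf g1) hj hg1c
      apply vstarFrac_ge_one L _ _ ?_ s1 w (mem_classAgents.mpr hwc) hwl hs1
      · have : ∑ a ∈ classAgents classOf j, ((if s1 = s0 ∧ a = g0 then (1:ℝ) else 0) +
            (if s1 = s1 ∧ a = g1 then 1 else 0)) = 1 := by
          rw [Finset.sum_add_distrib, sum_ite_and _ g0 (s1 = s0), sum_ite_and _ g1 (s1 = s1)]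
          simp [mem_classAgents, hc1, Ne.symm hs]
        exact this.symm.le
      · intro t
        apply Finset.sum_nonneg
        intro a _; dsimp only; split_ifs <;> norm_num

lemma propShare_ge_two (classOf : A → Fin 2) (L : List (Finset A)) (i : Fin 2)
    (s t1 t3 t2 : ℕ) (x0 u1 y0 u2 w2 : A)
    (hst1 : s ≠ t1) (hst3 : s ≠ t3) (hst2 : s ≠ t2)
    (ht13 : t1 ≠ t3) (ht12 : t1 ≠ t2) (ht32 : t3 ≠ t2)
    (hsl : s < L.length) (ht1l : t1 < L.length) (ht3l : t3 < L.length) (ht2l : t2 < L.length)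
    (hxu1 : x0 ≠ u1) (hxy : x0 ≠ y0) (hxu2 : x0 ≠ u2)
    (hu1y : u1 ≠ y0) (hu1u2 : u1 ≠ u2) (hyu2 : y0 ≠ u2) (hxw2 : x0 ≠ w2)
    (hx0l : x0 ∈ likersAt L s) (hu1l : u1 ∈ likersAt L t1)
    (hy0l : y0 ∈ likersAt L t3) (hu2l : u2 ∈ likersAt L t2)
    (hx0l3 : x0 ∈ likersAt L t3) (hw2l : w2 ∈ likersAt L t2)
    (hx0c : classOf x0 = i) (hu1c : classOf u1 = i) (hw2c : classOf w2 = i)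
    (hy0c : classOf y0 ≠ i) (hu2c : classOf u2 ≠ i) :
    (2:ℝ) ≤ propShare classOf L i := by
  apply le_propShare classOf L i i
  refine ⟨fun t a => (if t = s ∧ a = x0 then 1 else 0) + (if t = t1 ∧ a = u1 then 1 else 0) +
      (if t = t3 ∧ a = y0 then 1 else 0) + (if t = t2 ∧ a = u2 then 1 else 0),
    ?_, ?_, ?_, ?_, ?_⟩
  · intro t a; dsimp only; split_ifs <;> norm_num
  · intro t a h
    by_cases c1 : t = s ∧ a = x0
    · obtain ⟨rfl, rfl⟩ := c1; exact ⟨hx0l, hsl⟩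
    · by_cases c2 : t = t1 ∧ a = u1
      · obtain ⟨rfl, rfl⟩ := c2; exact ⟨hu1l, ht1l⟩
      · by_cases c3 : t = t3 ∧ a = y0
        · obtain ⟨rfl, rfl⟩ := c3; exact ⟨hy0l, ht3l⟩
        · by_cases c4 : t = t2 ∧ a = u2
          · obtain ⟨rfl, rfl⟩ := c4; exact ⟨hu2l, ht2l⟩
          · simp [c1, c2, c3, c4] at h
  · intro t
    rw [Finset.sum_add_distrib, Finset.sum_add_distrib, Finset.sum_add_distrib,
      sum_ite_and Finset.univ x0 (t = s), sum_ite_and Finset.univ u1 (t = t1),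
      sum_ite_and Finset.univ y0 (t = t3), sum_ite_and Finset.univ u2 (t = t2)]
    simp only [Finset.mem_univ, and_true]
    split_ifs <;> norm_num <;> omega
  · intro a
    rw [Finset.sum_add_distrib, Finset.sum_add_distrib, Finset.sum_add_distrib,
      sum_ite_and' (Finset.range L.length) s (a = x0),
      sum_ite_and' (Finset.range L.length) t1 (a = u1),
      sum_ite_and' (Finset.range L.length) t3 (a = y0),
      sum_ite_and' (Finset.range L.length) t2 (a = u2)]
    simp only [Finset.mem_range, hsl, ht1l, ht3l, ht2l, true_and]
    split_ifs <;> norm_num <;> simp_all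
  · intro j
    have hy : ∀ t, (0:ℝ) ≤ ∑ a ∈ classAgents classOf j,
        ((if t = s ∧ a = x0 then (1:ℝ) else 0) + (if t = t1 ∧ a = u1 then 1 else 0) +
        (if t = t3 ∧ a = y0 then 1 else 0) + (if t = t2 ∧ a = u2 then 1 else 0)) := by
      intro t
      apply Finset.sum_nonneg
      intro a _; split_ifs <;> norm_num
    have hbundle : ∀ t : ℕ, ∑ a ∈ classAgents classOf j,
        ((if t = s ∧ a = x0 then (1:ℝ) else 0) + (if t = t1 ∧ a = u1 then 1 else 0) +
        (if t = t3 ∧ a = y0 then 1 else 0) + (if t = t2 ∧ a = u2 then 1 else 0)) =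
        (if t = s ∧ classOf x0 = j then 1 else 0) + (if t = t1 ∧ classOf u1 = j then 1 else 0) +
        (if t = t3 ∧ classOf y0 = j then 1 else 0) + (if t = t2 ∧ classOf u2 = j then 1 else 0) := by
      intro t
      rw [Finset.sum_add_distrib, Finset.sum_add_distrib, Finset.sum_add_distrib,
        sum_ite_and _ x0 (t = s), sum_ite_and _ u1 (t = t1),
        sum_ite_and _ y0 (t = t3), sum_ite_and _ u2 (t = t2)]
      simp only [mem_classAgents]
    by_cases hj : j = i
    · subst hj
      apply vstarFrac_ge_two L _ _ hy s t1 x0 u1 hst1 hxu1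
        (mem_classAgents.mpr hx0c) (mem_classAgents.mpr hu1c) hx0l hu1l hsl ht1l
      · rw [hbundle s]
        simp [hx0c, hst1, hst3, hst2]
      · rw [hbundle t1]
        simp [hu1c, Ne.symm hst1, ht13, ht12]
    · have hy0j : classOf y0 = j := fin2_resolve i j (classOf y0) hj hy0c
      have hu2j : classOf u2 = j := fin2_resolve i j (classOf u2) hj hu2c
      apply vstarFrac_ge_two L _ _ hy t3 t2 x0 w2 ht32 hxw2
        (mem_classAgents.mpr hx0c) (mem_classAgents.mpr hw2c) hx0l3 hw2l ht3l ht2l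
      · rw [hbundle t3]
        simp [hy0j, Ne.symm hst3, Ne.symm ht13, ht32]
      · rw [hbundle t2]
        simp [hu2j, Ne.symm hst2, Ne.symm ht12, Ne.symm ht32]
end AuxProp


abbrev cf6 : Fin 6 → Fin 2 := fun a => if (a : ℕ) < 3 then 0 else 1

def L0six : List (Finset (Fin 6)) := [{0,3},{1,4},{2,5}]

lemma tsum_expect_le {β : Type*} (D : PMF β) (f : β → ℝ) (m : ℝ)
    (hf0 : ∀ b, 0 ≤ f b) (h : ∀ b ∈ D.support, f b ≤ m) :
    (∑' b, (D b).toReal * f b) ≤ m := by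
  have hs : Summable (fun b => (D b).toReal) :=
    ENNReal.summable_toReal (by rw [D.tsum_coe]; exact ENNReal.one_ne_top)
  have hsum1 : (∑' b, (D b).toReal) = 1 := by
    rw [← ENNReal.tsum_toReal_eq (fun b => PMF.apply_ne_top D b), D.tsum_coe, ENNReal.toReal_one]
  have hle : ∀ b, (D b).toReal * f b ≤ (D b).toReal * m := by
    intro b
    by_cases hb : b ∈ D.support
    · exact mul_le_mul_of_nonneg_left (h b hb) ENNReal.toReal_nonneg
    · rw [PMF.mem_support_iff, not_not] at hb
      simp [hb]
  have hsm : Summable (fun b => (D b).toReal * m) := hs.mul_right m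
  have hsf : Summable (fun b => (D b).toReal * f b) :=
    Summable.of_nonneg_of_le (fun b => mul_nonneg ENNReal.toReal_nonneg (hf0 b)) hle hsm
  calc (∑' b, (D b).toReal * f b) ≤ ∑' b, (D b).toReal * m := Summable.tsum_le_tsum hle hsf hsm
    _ = (∑' b, (D b).toReal) * m := tsum_mul_right
    _ = m := by rw [hsum1, one_mul]

lemma caseB (α : ℝ) (hα : α > 1 / 2)
    (classAlg : List (Finset (Fin 6)) → Finset (Fin 6) → Option (Fin 2))
    (D : PMF (OnlineAlg (Fin 6)))
    (hcons : ∀ Alg ∈ D.support, ConsistentWithClasses cf6 classAlg Alg)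
    (hval : ∀ (L : List (Finset (Fin 6))) (i : Fin 2),
      (∑' Alg : OnlineAlg (Fin 6), (D Alg).toReal *
          ((classItems cf6 Alg L i).card : ℝ)) ≥ α * propShare cf6 L i)
    (i : Fin 2) (s : ℕ) (hs : s < 3)
    (hoth : ∀ t, t < 3 → t ≠ s → classAlg (L0six.take t) (likersAt L0six t) ≠ some i) :
    False := by
  interval_cases s <;> fin_cases i
  · -- s = 0, i = 0
    have hprop : (2:ℝ) ≤ propShare cf6 [{0,3},{1,4},{2,5},{0,3}] 0 := by
      apply propShare_ge_two cf6 [{0,3},{1,4},{2,5},{0,3}] 0 0 1 3 2 0 1 3 5 2 <;> decide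
    have hcard : ∀ Alg ∈ D.support, (classItems cf6 Alg [{0,3},{1,4},{2,5},{0,3}] (0 : Fin 2)).card ≤ 1 := by
      intro Alg hA
      have hboth : ¬((0:ℕ) ∈ classItems cf6 Alg [{0,3},{1,4},{2,5},{0,3}] (0 : Fin 2) ∧
          (3:ℕ) ∈ classItems cf6 Alg [{0,3},{1,4},{2,5},{0,3}] (0 : Fin 2)) := by
        rintro ⟨hS, h3⟩
        simp only [classItems, Finset.mem_filter, Finset.mem_range] at hS h3
        obtain ⟨-, a, -, haS, hacS⟩ := hS
        obtain ⟨-, b, -, hb3, hbc3⟩ := h3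
        have haL := assignAt_spec haS
        have hbL := assignAt_spec hb3
        have hma : a ∈ ({0, 3} : Finset (Fin 6)) := haL.1
        have hmb : b ∈ ({0, 3} : Finset (Fin 6)) := hbL.1
        have ha' : a = 0 := by
          rcases Finset.mem_insert.mp hma with h | h
          · exact h
          · rw [Finset.mem_singleton] at h
            exact absurd hacS (by rw [h]; decide)
        have hb' : b = 0 := by
          rcases Finset.mem_insert.mp hmb with h | h
          · exact h
          · rw [Finset.mem_singleton] at h
            exact absurd hbc3 (by rw [h]; decide)
        subst ha'; subst hb'
        exact hbL.2.1 ((matchedUpTo_mono Alg [{0,3},{1,4},{2,5},{0,3}] (show 0+1 ≤ 3 by norm_num)) haL.2.2)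
      have hsub : classItems cf6 Alg [{0,3},{1,4},{2,5},{0,3}] (0 : Fin 2) ⊆ {0, 3} := by
        intro t ht
        simp only [classItems, Finset.mem_filter, Finset.mem_range] at ht
        obtain ⟨ht4, a, -, haT, hacT⟩ := ht
        have ht4' : t < 4 := by simpa using ht4
        have hcla := hcons Alg hA [{0,3},{1,4},{2,5},{0,3}] t a haT
        rw [hacT] at hcla
        interval_cases t
        · exact Finset.mem_insert_self _ _
        · exact absurd hcla (hoth 1 (by norm_num) (by norm_num))
        · exact absurd hcla (hoth 2 (by norm_num) (by norm_num))
        · simp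
      by_cases h3 : (3:ℕ) ∈ classItems cf6 Alg [{0,3},{1,4},{2,5},{0,3}] (0 : Fin 2)
      · have hss : classItems cf6 Alg [{0,3},{1,4},{2,5},{0,3}] (0 : Fin 2) ⊆ {3} := by
          intro t ht
          rcases Finset.mem_insert.mp (hsub ht) with h | h
          · refine absurd ⟨?_, h3⟩ hboth
            rwa [h] at ht
          · rw [Finset.mem_singleton] at h ⊢; exact h
        exact (Finset.card_le_card hss).trans (by simp)
      · have hss : classItems cf6 Alg [{0,3},{1,4},{2,5},{0,3}] (0 : Fin 2) ⊆ {0} := by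
          intro t ht
          rcases Finset.mem_insert.mp (hsub ht) with h | h
          · rw [Finset.mem_singleton]; exact h
          · rw [Finset.mem_singleton] at h
            exact absurd (by rwa [h] at ht) h3
        exact (Finset.card_le_card hss).trans (by simp)
    have hexp : (∑' Alg : OnlineAlg (Fin 6), (D Alg).toReal *
        ((classItems cf6 Alg [{0,3},{1,4},{2,5},{0,3}] (0 : Fin 2)).card : ℝ)) ≤ 1 :=
      tsum_expect_le D _ 1 (fun b => by positivity)
        (fun b hb => by exact_mod_cast hcard b hb)
    have hv := hval [{0,3},{1,4},{2,5},{0,3}] 0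
    have hα0 : (0:ℝ) < α := by linarith
    have hm := mul_le_mul_of_nonneg_left hprop hα0.le
    linarith
  · -- s = 0, i = 1
    have hprop : (2:ℝ) ≤ propShare cf6 [{0,3},{1,4},{2,5},{0,3}] 1 := by
      apply propShare_ge_two cf6 [{0,3},{1,4},{2,5},{0,3}] 1 0 1 3 2 3 4 0 2 5 <;> decide
    have hcard : ∀ Alg ∈ D.support, (classItems cf6 Alg [{0,3},{1,4},{2,5},{0,3}] (1 : Fin 2)).card ≤ 1 := by
      intro Alg hA
      have hboth : ¬((0:ℕ) ∈ classItems cf6 Alg [{0,3},{1,4},{2,5},{0,3}] (1 : Fin 2) ∧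
          (3:ℕ) ∈ classItems cf6 Alg [{0,3},{1,4},{2,5},{0,3}] (1 : Fin 2)) := by
        rintro ⟨hS, h3⟩
        simp only [classItems, Finset.mem_filter, Finset.mem_range] at hS h3
        obtain ⟨-, a, -, haS, hacS⟩ := hS
        obtain ⟨-, b, -, hb3, hbc3⟩ := h3
        have haL := assignAt_spec haS
        have hbL := assignAt_spec hb3
        have hma : a ∈ ({0, 3} : Finset (Fin 6)) := haL.1
        have hmb : b ∈ ({0, 3} : Finset (Fin 6)) := hbL.1
        have ha' : a = 3 := by
          rcases Finset.mem_insert.mp hma with h | h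
          · exact absurd hacS (by rw [h]; decide)
          · rw [Finset.mem_singleton] at h
            exact h
        have hb' : b = 3 := by
          rcases Finset.mem_insert.mp hmb with h | h
          · exact absurd hbc3 (by rw [h]; decide)
          · rw [Finset.mem_singleton] at h
            exact h
        subst ha'; subst hb'
        exact hbL.2.1 ((matchedUpTo_mono Alg [{0,3},{1,4},{2,5},{0,3}] (show 0+1 ≤ 3 by norm_num)) haL.2.2)
      have hsub : classItems cf6 Alg [{0,3},{1,4},{2,5},{0,3}] (1 : Fin 2) ⊆ {0, 3} := by
        intro t ht
        simp only [classItems, Finset.mem_filter, Finset.mem_range] at ht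
        obtain ⟨ht4, a, -, haT, hacT⟩ := ht
        have ht4' : t < 4 := by simpa using ht4
        have hcla := hcons Alg hA [{0,3},{1,4},{2,5},{0,3}] t a haT
        rw [hacT] at hcla
        interval_cases t
        · exact Finset.mem_insert_self _ _
        · exact absurd hcla (hoth 1 (by norm_num) (by norm_num))
        · exact absurd hcla (hoth 2 (by norm_num) (by norm_num))
        · simp
      by_cases h3 : (3:ℕ) ∈ classItems cf6 Alg [{0,3},{1,4},{2,5},{0,3}] (1 : Fin 2)
      · have hss : classItems cf6 Alg [{0,3},{1,4},{2,5},{0,3}] (1 : Fin 2) ⊆ {3} := by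
          intro t ht
          rcases Finset.mem_insert.mp (hsub ht) with h | h
          · refine absurd ⟨?_, h3⟩ hboth
            rwa [h] at ht
          · rw [Finset.mem_singleton] at h ⊢; exact h
        exact (Finset.card_le_card hss).trans (by simp)
      · have hss : classItems cf6 Alg [{0,3},{1,4},{2,5},{0,3}] (1 : Fin 2) ⊆ {0} := by
          intro t ht
          rcases Finset.mem_insert.mp (hsub ht) with h | h
          · rw [Finset.mem_singleton]; exact h
          · rw [Finset.mem_singleton] at h
            exact absurd (by rwa [h] at ht) h3
        exact (Finset.card_le_card hss).trans (by simp)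
    have hexp : (∑' Alg : OnlineAlg (Fin 6), (D Alg).toReal *
        ((classItems cf6 Alg [{0,3},{1,4},{2,5},{0,3}] (1 : Fin 2)).card : ℝ)) ≤ 1 :=
      tsum_expect_le D _ 1 (fun b => by positivity)
        (fun b hb => by exact_mod_cast hcard b hb)
    have hv := hval [{0,3},{1,4},{2,5},{0,3}] 1
    have hα0 : (0:ℝ) < α := by linarith
    have hm := mul_le_mul_of_nonneg_left hprop hα0.le
    linarith
  · -- s = 1, i = 0
    have hprop : (2:ℝ) ≤ propShare cf6 [{0,3},{1,4},{2,5},{1,4}] 0 := by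
      apply propShare_ge_two cf6 [{0,3},{1,4},{2,5},{1,4}] 0 1 0 3 2 1 0 4 5 2 <;> decide
    have hcard : ∀ Alg ∈ D.support, (classItems cf6 Alg [{0,3},{1,4},{2,5},{1,4}] (0 : Fin 2)).card ≤ 1 := by
      intro Alg hA
      have hboth : ¬((1:ℕ) ∈ classItems cf6 Alg [{0,3},{1,4},{2,5},{1,4}] (0 : Fin 2) ∧
          (3:ℕ) ∈ classItems cf6 Alg [{0,3},{1,4},{2,5},{1,4}] (0 : Fin 2)) := by
        rintro ⟨hS, h3⟩
        simp only [classItems, Finset.mem_filter, Finset.mem_range] at hS h3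
        obtain ⟨-, a, -, haS, hacS⟩ := hS
        obtain ⟨-, b, -, hb3, hbc3⟩ := h3
        have haL := assignAt_spec haS
        have hbL := assignAt_spec hb3
        have hma : a ∈ ({1, 4} : Finset (Fin 6)) := haL.1
        have hmb : b ∈ ({1, 4} : Finset (Fin 6)) := hbL.1
        have ha' : a = 1 := by
          rcases Finset.mem_insert.mp hma with h | h
          · exact h
          · rw [Finset.mem_singleton] at h
            exact absurd hacS (by rw [h]; decide)
        have hb' : b = 1 := by
          rcases Finset.mem_insert.mp hmb with h | h
          · exact h
          · rw [Finset.mem_singleton] at h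
            exact absurd hbc3 (by rw [h]; decide)
        subst ha'; subst hb'
        exact hbL.2.1 ((matchedUpTo_mono Alg [{0,3},{1,4},{2,5},{1,4}] (show 1+1 ≤ 3 by norm_num)) haL.2.2)
      have hsub : classItems cf6 Alg [{0,3},{1,4},{2,5},{1,4}] (0 : Fin 2) ⊆ {1, 3} := by
        intro t ht
        simp only [classItems, Finset.mem_filter, Finset.mem_range] at ht
        obtain ⟨ht4, a, -, haT, hacT⟩ := ht
        have ht4' : t < 4 := by simpa using ht4
        have hcla := hcons Alg hA [{0,3},{1,4},{2,5},{1,4}] t a haT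
        rw [hacT] at hcla
        interval_cases t
        · exact absurd hcla (hoth 0 (by norm_num) (by norm_num))
        · exact Finset.mem_insert_self _ _
        · exact absurd hcla (hoth 2 (by norm_num) (by norm_num))
        · simp
      by_cases h3 : (3:ℕ) ∈ classItems cf6 Alg [{0,3},{1,4},{2,5},{1,4}] (0 : Fin 2)
      · have hss : classItems cf6 Alg [{0,3},{1,4},{2,5},{1,4}] (0 : Fin 2) ⊆ {3} := by
          intro t ht
          rcases Finset.mem_insert.mp (hsub ht) with h | h
          · refine absurd ⟨?_, h3⟩ hboth
            rwa [h] at ht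
          · rw [Finset.mem_singleton] at h ⊢; exact h
        exact (Finset.card_le_card hss).trans (by simp)
      · have hss : classItems cf6 Alg [{0,3},{1,4},{2,5},{1,4}] (0 : Fin 2) ⊆ {1} := by
          intro t ht
          rcases Finset.mem_insert.mp (hsub ht) with h | h
          · rw [Finset.mem_singleton]; exact h
          · rw [Finset.mem_singleton] at h
            exact absurd (by rwa [h] at ht) h3
        exact (Finset.card_le_card hss).trans (by simp)
    have hexp : (∑' Alg : OnlineAlg (Fin 6), (D Alg).toReal *
        ((classItems cf6 Alg [{0,3},{1,4},{2,5},{1,4}] (0 : Fin 2)).card : ℝ)) ≤ 1 :=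
      tsum_expect_le D _ 1 (fun b => by positivity)
        (fun b hb => by exact_mod_cast hcard b hb)
    have hv := hval [{0,3},{1,4},{2,5},{1,4}] 0
    have hα0 : (0:ℝ) < α := by linarith
    have hm := mul_le_mul_of_nonneg_left hprop hα0.le
    linarith
  · -- s = 1, i = 1
    have hprop : (2:ℝ) ≤ propShare cf6 [{0,3},{1,4},{2,5},{1,4}] 1 := by
      apply propShare_ge_two cf6 [{0,3},{1,4},{2,5},{1,4}] 1 1 0 3 2 4 3 1 2 5 <;> decide
    have hcard : ∀ Alg ∈ D.support, (classItems cf6 Alg [{0,3},{1,4},{2,5},{1,4}] (1 : Fin 2)).card ≤ 1 := by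
      intro Alg hA
      have hboth : ¬((1:ℕ) ∈ classItems cf6 Alg [{0,3},{1,4},{2,5},{1,4}] (1 : Fin 2) ∧
          (3:ℕ) ∈ classItems cf6 Alg [{0,3},{1,4},{2,5},{1,4}] (1 : Fin 2)) := by
        rintro ⟨hS, h3⟩
        simp only [classItems, Finset.mem_filter, Finset.mem_range] at hS h3
        obtain ⟨-, a, -, haS, hacS⟩ := hS
        obtain ⟨-, b, -, hb3, hbc3⟩ := h3
        have haL := assignAt_spec haS
        have hbL := assignAt_spec hb3
        have hma : a ∈ ({1, 4} : Finset (Fin 6)) := haL.1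
        have hmb : b ∈ ({1, 4} : Finset (Fin 6)) := hbL.1
        have ha' : a = 4 := by
          rcases Finset.mem_insert.mp hma with h | h
          · exact absurd hacS (by rw [h]; decide)
          · rw [Finset.mem_singleton] at h
            exact h
        have hb' : b = 4 := by
          rcases Finset.mem_insert.mp hmb with h | h
          · exact absurd hbc3 (by rw [h]; decide)
          · rw [Finset.mem_singleton] at h
            exact h
        subst ha'; subst hb'
        exact hbL.2.1 ((matchedUpTo_mono Alg [{0,3},{1,4},{2,5},{1,4}] (show 1+1 ≤ 3 by norm_num)) haL.2.2)
      have hsub : classItems cf6 Alg [{0,3},{1,4},{2,5},{1,4}] (1 : Fin 2) ⊆ {1, 3} := by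
        intro t ht
        simp only [classItems, Finset.mem_filter, Finset.mem_range] at ht
        obtain ⟨ht4, a, -, haT, hacT⟩ := ht
        have ht4' : t < 4 := by simpa using ht4
        have hcla := hcons Alg hA [{0,3},{1,4},{2,5},{1,4}] t a haT
        rw [hacT] at hcla
        interval_cases t
        · exact absurd hcla (hoth 0 (by norm_num) (by norm_num))
        · exact Finset.mem_insert_self _ _
        · exact absurd hcla (hoth 2 (by norm_num) (by norm_num))
        · simp
      by_cases h3 : (3:ℕ) ∈ classItems cf6 Alg [{0,3},{1,4},{2,5},{1,4}] (1 : Fin 2)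
      · have hss : classItems cf6 Alg [{0,3},{1,4},{2,5},{1,4}] (1 : Fin 2) ⊆ {3} := by
          intro t ht
          rcases Finset.mem_insert.mp (hsub ht) with h | h
          · refine absurd ⟨?_, h3⟩ hboth
            rwa [h] at ht
          · rw [Finset.mem_singleton] at h ⊢; exact h
        exact (Finset.card_le_card hss).trans (by simp)
      · have hss : classItems cf6 Alg [{0,3},{1,4},{2,5},{1,4}] (1 : Fin 2) ⊆ {1} := by
          intro t ht
          rcases Finset.mem_insert.mp (hsub ht) with h | h
          · rw [Finset.mem_singleton]; exact h
          · rw [Finset.mem_singleton] at h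
            exact absurd (by rwa [h] at ht) h3
        exact (Finset.card_le_card hss).trans (by simp)
    have hexp : (∑' Alg : OnlineAlg (Fin 6), (D Alg).toReal *
        ((classItems cf6 Alg [{0,3},{1,4},{2,5},{1,4}] (1 : Fin 2)).card : ℝ)) ≤ 1 :=
      tsum_expect_le D _ 1 (fun b => by positivity)
        (fun b hb => by exact_mod_cast hcard b hb)
    have hv := hval [{0,3},{1,4},{2,5},{1,4}] 1
    have hα0 : (0:ℝ) < α := by linarith
    have hm := mul_le_mul_of_nonneg_left hprop hα0.le
    linarith
  · -- s = 2, i = 0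
    have hprop : (2:ℝ) ≤ propShare cf6 [{0,3},{1,4},{2,5},{2,5}] 0 := by
      apply propShare_ge_two cf6 [{0,3},{1,4},{2,5},{2,5}] 0 2 0 3 1 2 0 5 4 1 <;> decide
    have hcard : ∀ Alg ∈ D.support, (classItems cf6 Alg [{0,3},{1,4},{2,5},{2,5}] (0 : Fin 2)).card ≤ 1 := by
      intro Alg hA
      have hboth : ¬((2:ℕ) ∈ classItems cf6 Alg [{0,3},{1,4},{2,5},{2,5}] (0 : Fin 2) ∧
          (3:ℕ) ∈ classItems cf6 Alg [{0,3},{1,4},{2,5},{2,5}] (0 : Fin 2)) := by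
        rintro ⟨hS, h3⟩
        simp only [classItems, Finset.mem_filter, Finset.mem_range] at hS h3
        obtain ⟨-, a, -, haS, hacS⟩ := hS
        obtain ⟨-, b, -, hb3, hbc3⟩ := h3
        have haL := assignAt_spec haS
        have hbL := assignAt_spec hb3
        have hma : a ∈ ({2, 5} : Finset (Fin 6)) := haL.1
        have hmb : b ∈ ({2, 5} : Finset (Fin 6)) := hbL.1
        have ha' : a = 2 := by
          rcases Finset.mem_insert.mp hma with h | h
          · exact h
          · rw [Finset.mem_singleton] at h
            exact absurd hacS (by rw [h]; decide)
        have hb' : b = 2 := by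
          rcases Finset.mem_insert.mp hmb with h | h
          · exact h
          · rw [Finset.mem_singleton] at h
            exact absurd hbc3 (by rw [h]; decide)
        subst ha'; subst hb'
        exact hbL.2.1 ((matchedUpTo_mono Alg [{0,3},{1,4},{2,5},{2,5}] (show 2+1 ≤ 3 by norm_num)) haL.2.2)
      have hsub : classItems cf6 Alg [{0,3},{1,4},{2,5},{2,5}] (0 : Fin 2) ⊆ {2, 3} := by
        intro t ht
        simp only [classItems, Finset.mem_filter, Finset.mem_range] at ht
        obtain ⟨ht4, a, -, haT, hacT⟩ := ht
        have ht4' : t < 4 := by simpa using ht4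
        have hcla := hcons Alg hA [{0,3},{1,4},{2,5},{2,5}] t a haT
        rw [hacT] at hcla
        interval_cases t
        · exact absurd hcla (hoth 0 (by norm_num) (by norm_num))
        · exact absurd hcla (hoth 1 (by norm_num) (by norm_num))
        · exact Finset.mem_insert_self _ _
        · simp
      by_cases h3 : (3:ℕ) ∈ classItems cf6 Alg [{0,3},{1,4},{2,5},{2,5}] (0 : Fin 2)
      · have hss : classItems cf6 Alg [{0,3},{1,4},{2,5},{2,5}] (0 : Fin 2) ⊆ {3} := by
          intro t ht
          rcases Finset.mem_insert.mp (hsub ht) with h | h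
          · refine absurd ⟨?_, h3⟩ hboth
            rwa [h] at ht
          · rw [Finset.mem_singleton] at h ⊢; exact h
        exact (Finset.card_le_card hss).trans (by simp)
      · have hss : classItems cf6 Alg [{0,3},{1,4},{2,5},{2,5}] (0 : Fin 2) ⊆ {2} := by
          intro t ht
          rcases Finset.mem_insert.mp (hsub ht) with h | h
          · rw [Finset.mem_singleton]; exact h
          · rw [Finset.mem_singleton] at h
            exact absurd (by rwa [h] at ht) h3
        exact (Finset.card_le_card hss).trans (by simp)
    have hexp : (∑' Alg : OnlineAlg (Fin 6), (D Alg).toReal *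
        ((classItems cf6 Alg [{0,3},{1,4},{2,5},{2,5}] (0 : Fin 2)).card : ℝ)) ≤ 1 :=
      tsum_expect_le D _ 1 (fun b => by positivity)
        (fun b hb => by exact_mod_cast hcard b hb)
    have hv := hval [{0,3},{1,4},{2,5},{2,5}] 0
    have hα0 : (0:ℝ) < α := by linarith
    have hm := mul_le_mul_of_nonneg_left hprop hα0.le
    linarith
  · -- s = 2, i = 1
    have hprop : (2:ℝ) ≤ propShare cf6 [{0,3},{1,4},{2,5},{2,5}] 1 := by
      apply propShare_ge_two cf6 [{0,3},{1,4},{2,5},{2,5}] 1 2 0 3 1 5 3 2 1 4 <;> decide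
    have hcard : ∀ Alg ∈ D.support, (classItems cf6 Alg [{0,3},{1,4},{2,5},{2,5}] (1 : Fin 2)).card ≤ 1 := by
      intro Alg hA
      have hboth : ¬((2:ℕ) ∈ classItems cf6 Alg [{0,3},{1,4},{2,5},{2,5}] (1 : Fin 2) ∧
          (3:ℕ) ∈ classItems cf6 Alg [{0,3},{1,4},{2,5},{2,5}] (1 : Fin 2)) := by
        rintro ⟨hS, h3⟩
        simp only [classItems, Finset.mem_filter, Finset.mem_range] at hS h3
        obtain ⟨-, a, -, haS, hacS⟩ := hS
        obtain ⟨-, b, -, hb3, hbc3⟩ := h3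
        have haL := assignAt_spec haS
        have hbL := assignAt_spec hb3
        have hma : a ∈ ({2, 5} : Finset (Fin 6)) := haL.1
        have hmb : b ∈ ({2, 5} : Finset (Fin 6)) := hbL.1
        have ha' : a = 5 := by
          rcases Finset.mem_insert.mp hma with h | h
          · exact absurd hacS (by rw [h]; decide)
          · rw [Finset.mem_singleton] at h
            exact h
        have hb' : b = 5 := by
          rcases Finset.mem_insert.mp hmb with h | h
          · exact absurd hbc3 (by rw [h]; decide)
          · rw [Finset.mem_singleton] at h
            exact h
        subst ha'; subst hb'
        exact hbL.2.1 ((matchedUpTo_mono Alg [{0,3},{1,4},{2,5},{2,5}] (show 2+1 ≤ 3 by norm_num)) haL.2.2)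
      have hsub : classItems cf6 Alg [{0,3},{1,4},{2,5},{2,5}] (1 : Fin 2) ⊆ {2, 3} := by
        intro t ht
        simp only [classItems, Finset.mem_filter, Finset.mem_range] at ht
        obtain ⟨ht4, a, -, haT, hacT⟩ := ht
        have ht4' : t < 4 := by simpa using ht4
        have hcla := hcons Alg hA [{0,3},{1,4},{2,5},{2,5}] t a haT
        rw [hacT] at hcla
        interval_cases t
        · exact absurd hcla (hoth 0 (by norm_num) (by norm_num))
        · exact absurd hcla (hoth 1 (by norm_num) (by norm_num))
        · exact Finset.mem_insert_self _ _
        · simp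
      by_cases h3 : (3:ℕ) ∈ classItems cf6 Alg [{0,3},{1,4},{2,5},{2,5}] (1 : Fin 2)
      · have hss : classItems cf6 Alg [{0,3},{1,4},{2,5},{2,5}] (1 : Fin 2) ⊆ {3} := by
          intro t ht
          rcases Finset.mem_insert.mp (hsub ht) with h | h
          · refine absurd ⟨?_, h3⟩ hboth
            rwa [h] at ht
          · rw [Finset.mem_singleton] at h ⊢; exact h
        exact (Finset.card_le_card hss).trans (by simp)
      · have hss : classItems cf6 Alg [{0,3},{1,4},{2,5},{2,5}] (1 : Fin 2) ⊆ {2} := by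
          intro t ht
          rcases Finset.mem_insert.mp (hsub ht) with h | h
          · rw [Finset.mem_singleton]; exact h
          · rw [Finset.mem_singleton] at h
            exact absurd (by rwa [h] at ht) h3
        exact (Finset.card_le_card hss).trans (by simp)
    have hexp : (∑' Alg : OnlineAlg (Fin 6), (D Alg).toReal *
        ((classItems cf6 Alg [{0,3},{1,4},{2,5},{2,5}] (1 : Fin 2)).card : ℝ)) ≤ 1 :=
      tsum_expect_le D _ 1 (fun b => by positivity)
        (fun b hb => by exact_mod_cast hcard b hb)
    have hv := hval [{0,3},{1,4},{2,5},{2,5}] 1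
    have hα0 : (0:ℝ) < α := by linarith
    have hm := mul_le_mul_of_nonneg_left hprop hα0.le
    linarith


/-- Any online algorithm that assigns each item deterministically at the class level
(possibly randomizing within classes) is at best `(1/2)`-CPROP: with six agents in
two classes of three, for no `α > 1/2` is there a deterministic class-level rule and
a randomized within-class completion whose expected class values are `α`-CPROP on
every instance (the adversarial instance has at most four items). -/
theorem stmt_17 (α : ℝ) (hα : α > 1 / 2) :
    ¬ ∃ (classAlg : List (Finset (Fin 6)) → Finset (Fin 6) → Option (Fin 2))
        (D : PMF (OnlineAlg (Fin 6))),
      (∀ Alg ∈ D.support,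
        ConsistentWithClasses (fun a : Fin 6 => if (a : ℕ) < 3 then (0 : Fin 2) else 1)
          classAlg Alg) ∧
      (∀ (L : List (Finset (Fin 6))) (i : Fin 2),
        (∑' Alg : OnlineAlg (Fin 6), (D Alg).toReal *
            ((classItems (fun a : Fin 6 => if (a : ℕ) < 3 then (0 : Fin 2) else 1)
              Alg L i).card : ℝ)) ≥
          α * propShare (fun a : Fin 6 => if (a : ℕ) < 3 then (0 : Fin 2) else 1) L i) := by
  rintro ⟨classAlg, D, hcons, hval⟩
  have key : ∀ (i : Fin 2) (s : ℕ), s < 3 →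
      (∀ t, t < 3 → t ≠ s → classAlg (L0six.take t) (likersAt L0six t) ≠ some i) → False :=
    fun i s hs hoth => caseB α hα classAlg D hcons hval i s hs hoth
  have cover : ∀ o : Fin 3 → Option (Fin 2), ∃ (i : Fin 2) (s : Fin 3),
      ∀ t : Fin 3, t ≠ s → o t ≠ some i := by decide
  obtain ⟨i, s, hcov⟩ := cover (fun t => classAlg (L0six.take (t:ℕ)) (likersAt L0six (t:ℕ)))
  refine key i (s:ℕ) s.isLt (fun t ht hts => ?_)
  exact hcov ⟨t, ht⟩ (fun h => hts (by rw [← h]))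


end
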